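/- Let G be a connected chordal graph, and let U and U' be two units in the same bag of the layer structure (i.e., adjacent units in the same layer), with common parent P. Then for every edge KK' of C(G) with K in U and K' in U', there exists a maximal clique K'' contained in P that is adjacent in C(G) to both K and K'. -/

import Mathlib

open SimpleGraph

attribute [local instance] Classical.propDecidable
set_option linter.unusedSectionVars false

variable {V : Type*} [Fintype V] [DecidableEq V]

/-- A graph is chordal if it has no induced cycle of length at least 4. -/
def IsChordal (G : SimpleGraph V) : Prop :=
  ∀ n : ℕ, 4 ≤ n →
    ¬ ∃ f : Fin n ↪ V, ∀ i j, (cycleGraph n).Adj i j ↔ G.Adj (f i) (f j)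

/-- `K` is a maximal clique of `G`. -/
def MaxClique (G : SimpleGraph V) (K : Finset V) : Prop :=
  G.IsClique (K : Set V) ∧ ∀ K' : Finset V, G.IsClique (K' : Set V) → K ⊆ K' → K = K'

/-- The type of maximal cliques of `G`. -/
abbrev CV (G : SimpleGraph V) := {K : Finset V // MaxClique G K}

/-- `S` is a `u`-`v` separator of `G`: `u, v ∉ S` and every `u`-`v` walk meets `S`. -/
def Separates (G : SimpleGraph V) (S : Finset V) (u v : V) : Prop :=
  u ∉ S ∧ v ∉ S ∧ ∀ p : G.Walk u v, ∃ x ∈ p.support, x ∈ S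

lemma Separates.symm' {G : SimpleGraph V} {S : Finset V} {u v : V}
    (h : Separates G S u v) : Separates G S v u := by
  obtain ⟨hu, hv, h⟩ := h
  refine ⟨hv, hu, fun p => ?_⟩
  obtain ⟨x, hx, hxS⟩ := h p.reverse
  refine ⟨x, ?_, hxS⟩
  simpa using hx

/-- `S` is a minimal `u`-`v` separator of `G`. -/
def MinSeparates (G : SimpleGraph V) (S : Finset V) (u v : V) : Prop :=
  Separates G S u v ∧ ∀ S' : Finset V, S' ⊂ S → ¬ Separates G S' u v

lemma MinSeparates.symm' {G : SimpleGraph V} {S : Finset V} {u v : V}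
    (h : MinSeparates G S u v) : MinSeparates G S v u :=
  ⟨h.1.symm', fun S' hS' hc => h.2 S' hS' hc.symm'⟩

/-- The clique graph `C(G)` of `G`: vertices are the maximal cliques; `K` and `K'` are
adjacent iff `K ∩ K'` is a minimal `u`-`v` separator for all `u ∈ K \ K'`, `v ∈ K' \ K`. -/
def cliqueGraph (G : SimpleGraph V) : SimpleGraph (CV G) where
  Adj K K' := K ≠ K' ∧
    ∀ u ∈ K.1 \ K'.1, ∀ v ∈ K'.1 \ K.1, MinSeparates G (K.1 ∩ K'.1) u v
  symm := by
    constructor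
    rintro K K' ⟨hne, h⟩
    refine ⟨hne.symm, fun u hu v hv => ?_⟩
    rw [Finset.inter_comm]
    exact (h v hv u hu).symm'
  loopless := by constructor; rintro K ⟨hne, -⟩; exact hne rfl

/-- A clique tree of `G`: a tree on the maximal cliques of `G` such that for every vertex
`v`, the maximal cliques containing `v` induce a connected subgraph (a subtree). -/
def IsCliqueTree (G : SimpleGraph V) (T : SimpleGraph (CV G)) : Prop :=
  T.IsTree ∧ ∀ v : V, (T.induce {K : CV G | v ∈ K.1}).Connected

/-- `C(G) ⊖ S`: the clique graph with all edges labeled `S` deleted. -/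
def deleteLabel (G : SimpleGraph V) (S : Finset V) : SimpleGraph (CV G) where
  Adj K K' := (cliqueGraph G).Adj K K' ∧ K.1 ∩ K'.1 ≠ S
  symm := by
    constructor
    rintro K K' ⟨h, hS⟩
    exact ⟨h.symm, by rwa [Finset.inter_comm]⟩
  loopless := by constructor; rintro K ⟨h, -⟩; exact (cliqueGraph G).irrefl h

/-- `w` is the minimum edge weight of `C(G)` (weights are `|K ∩ K'|`). -/
def IsMinEdgeWeight (G : SimpleGraph V) (w : ℕ) : Prop :=
  (∃ K K' : CV G, (cliqueGraph G).Adj K K' ∧ (K.1 ∩ K'.1).card = w) ∧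
    ∀ K K' : CV G, (cliqueGraph G).Adj K K' → w ≤ (K.1 ∩ K'.1).card

/-- `C(G)` with all edges of (minimum) weight `w` deleted; its connected components are
the units. -/
def unitGraph (G : SimpleGraph V) (w : ℕ) : SimpleGraph (CV G) where
  Adj K K' := (cliqueGraph G).Adj K K' ∧ (K.1 ∩ K'.1).card ≠ w
  symm := by
    constructor
    rintro K K' ⟨h, hw⟩
    exact ⟨h.symm, by rwa [Finset.inter_comm]⟩
  loopless := by constructor; rintro K ⟨h, -⟩; exact (cliqueGraph G).irrefl h

/-- The type of units. -/
abbrev LUnit (G : SimpleGraph V) (w : ℕ) := (unitGraph G w).ConnectedComponent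

/-- The unit containing a maximal clique `K`. -/
def umk (G : SimpleGraph V) (w : ℕ) (K : CV G) : LUnit G w :=
  (unitGraph G w).connectedComponentMk K

/-- The layer structure: units are its vertices; two units are adjacent iff some
edge of `C(G)` crosses them. -/
def layerGraph (G : SimpleGraph V) (w : ℕ) : SimpleGraph (LUnit G w) where
  Adj U U' := U ≠ U' ∧ ∃ K K' : CV G,
    (cliqueGraph G).Adj K K' ∧ umk G w K = U ∧ umk G w K' = U'
  symm := by
    constructor
    rintro U U' ⟨hne, K, K', hadj, hK, hK'⟩
    exact ⟨hne.symm, K', K, hadj.symm, hK', hK⟩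
  loopless := by constructor; rintro U ⟨hne, -⟩; exact hne rfl

/-- All edges of `C(G)` crossing `U` and `U'` have the label `S`. -/
def CrossLabel (G : SimpleGraph V) (w : ℕ) (U U' : LUnit G w) (S : Finset V) : Prop :=
  ∀ K K' : CV G, (cliqueGraph G).Adj K K' → umk G w K = U → umk G w K' = U' →
    K.1 ∩ K'.1 = S

/-- `𝒱(U)`: the vertices of `G` contained in some maximal clique of the unit `U`. -/
def unitVerts (G : SimpleGraph V) (w : ℕ) (U : LUnit G w) : Set V :=
  {x | ∃ K : CV G, umk G w K = U ∧ x ∈ K.1}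

/-- An MCS ordering of `G`: at each step, the visited vertex has the maximum number of
already visited neighbors among unvisited vertices. -/
def IsMCSOrdering (G : SimpleGraph V) (σ : Fin (Fintype.card V) ≃ V) : Prop :=
  ∀ i j : Fin (Fintype.card V), i ≤ j →
    (Finset.univ.filter fun l => l < i ∧ G.Adj (σ l) (σ j)).card ≤
      (Finset.univ.filter fun l => l < i ∧ G.Adj (σ l) (σ i)).card

/-- A Prim ordering of `C(G)`: each vertex after the first is incident to an edge of
maximum weight among all edges between visited and unvisited vertices. -/
def IsPrimOrdering (G : SimpleGraph V) (π : Fin (Fintype.card (CV G)) ≃ CV G) : Prop :=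
  ∀ i : Fin (Fintype.card (CV G)), 0 < (i : ℕ) →
    ∃ j, j < i ∧ (cliqueGraph G).Adj (π j) (π i) ∧
      ∀ j' k, j' < i → i ≤ k → (cliqueGraph G).Adj (π j') (π k) →
        ((π j').1 ∩ (π k).1).card ≤ ((π j).1 ∩ (π i).1).card

/-- The position in `π` of the first maximal clique containing `x`. -/
noncomputable def firstIdx (G : SimpleGraph V)
    (π : Fin (Fintype.card (CV G)) ≃ CV G) (x : V) : ℕ :=
  sInf {j : ℕ | ∃ h : j < Fintype.card (CV G), x ∈ (π ⟨j, h⟩).1}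

/-- `σ` is a generation of `π`. -/
def IsGeneration (G : SimpleGraph V) (π : Fin (Fintype.card (CV G)) ≃ CV G)
    (σ : Fin (Fintype.card V) ≃ V) : Prop :=
  ∀ x y : V, firstIdx G π x < firstIdx G π y → σ.symm x < σ.symm y

/-- `σ` is a linear extension of the relation `R`. -/
def ExtendsR (R : V → V → Prop) (σ : Fin (Fintype.card V) ≃ V) : Prop :=
  ∀ x y : V, R x y → x ≠ y → σ.symm x < σ.symm y

/-- `π` respects `R`. -/
def RespectsR (G : SimpleGraph V) (R : V → V → Prop)
    (π : Fin (Fintype.card (CV G)) ≃ CV G) : Prop :=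
  ∀ x y : V, R x y → x ≠ y → firstIdx G π x ≤ firstIdx G π y

/-- The set of vertices of `G` contained in one of the first `i` cliques of `π`. -/
def primPrefixVerts (G : SimpleGraph V) (π : Fin (Fintype.card (CV G)) ≃ CV G)
    (i : ℕ) : Set V :=
  {x | ∃ j : Fin (Fintype.card (CV G)), (j : ℕ) < i ∧ x ∈ (π j).1}

/-!
Let `S = K ∩ K'`. An edge of `C(G)` between two units has weight exactly `w`, while every
edge inside a unit has a label of size `> w`, hence not contained in `S`; so each unit lies,
outside `S`, in one component of `G - S`. The units `U` and `U'` lie in different such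
components, and `P` lies in a component different from both. For the edge `A B` joining
`U` to `P`, this forces `A ∩ B ⊆ S`, hence `A ∩ B = S` by size and `S ⊆ B`. Then
`B ∩ K = B ∩ K' = S` separates `B` from `K` and from `K'`, so `B` is adjacent to both.
-/

section

variable {G : SimpleGraph V} {w : ℕ}

def ReachableAvoiding (G : SimpleGraph V) (S : Finset V) (u v : V) : Prop :=
  ∃ p : G.Walk u v, ∀ x ∈ p.support, x ∉ S

namespace ReachableAvoiding

variable {S : Finset V} {u v x : V}

lemma refl (hu : u ∉ S) : ReachableAvoiding G S u u :=
  ⟨.nil, by simpa using hu⟩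

lemma symm (h : ReachableAvoiding G S u v) : ReachableAvoiding G S v u := by
  obtain ⟨p, hp⟩ := h
  exact ⟨p.reverse, fun x hx => hp x (by simpa using hx)⟩

lemma trans (h₁ : ReachableAvoiding G S u v) (h₂ : ReachableAvoiding G S v x) :
    ReachableAvoiding G S u x := by
  obtain ⟨p, hp⟩ := h₁
  obtain ⟨q, hq⟩ := h₂
  refine ⟨p.append q, fun y hy => ?_⟩
  rcases (Walk.mem_support_append_iff p q).1 hy with hy | hy
  exacts [hp y hy, hq y hy]

lemma of_adj (h : G.Adj u v) (hu : u ∉ S) (hv : v ∉ S) : ReachableAvoiding G S u v :=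
  ⟨.cons h .nil, by simp [hu, hv]⟩

lemma of_isClique {K : Set V} (hK : G.IsClique K) (hu : u ∈ K) (hv : v ∈ K)
    (huS : u ∉ S) (hvS : v ∉ S) : ReachableAvoiding G S u v := by
  obtain rfl | huv := eq_or_ne u v
  exacts [refl huS, of_adj (hK hu hv huv) huS hvS]

end ReachableAvoiding

lemma separates_iff {S : Finset V} {u v : V} :
    Separates G S u v ↔ u ∉ S ∧ v ∉ S ∧ ¬ ReachableAvoiding G S u v := by
  simp only [Separates, ReachableAvoiding, not_exists, not_forall, not_not, exists_prop]

/-- For cliques `X` and `Y` this does not depend on the choice of the two vertices. -/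
def Linked (G : SimpleGraph V) (S X Y : Finset V) : Prop :=
  ∃ u ∈ X \ S, ∃ v ∈ Y \ S, ReachableAvoiding G S u v

namespace Linked

variable {S X Y Z : Finset V}

lemma symm (h : Linked G S X Y) : Linked G S Y X := by
  obtain ⟨u, hu, v, hv, huv⟩ := h
  exact ⟨v, hv, u, hu, huv.symm⟩

lemma trans (hY : G.IsClique (Y : Set V)) (h₁ : Linked G S X Y) (h₂ : Linked G S Y Z) :
    Linked G S X Z := by
  obtain ⟨u, hu, v, hv, huv⟩ := h₁
  obtain ⟨v', hv', x, hx, hv'x⟩ := h₂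
  rw [Finset.mem_sdiff] at hv hv'
  exact ⟨u, hu, x, hx,
    huv.trans ((ReachableAvoiding.of_isClique hY hv.1 hv'.1 hv.2 hv'.2).trans hv'x)⟩

lemma of_mem_inter {x : V} (hX : x ∈ X) (hY : x ∈ Y) (hS : x ∉ S) : Linked G S X Y :=
  ⟨x, Finset.mem_sdiff.2 ⟨hX, hS⟩, x, Finset.mem_sdiff.2 ⟨hY, hS⟩, .refl hS⟩

lemma of_not_subset (hXS : ¬ X ⊆ S) : Linked G S X X := by
  obtain ⟨x, hx, hxS⟩ := Finset.not_subset.1 hXS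
  exact of_mem_inter hx hx hxS

end Linked

/-- Minimality of the separator is automatic: dropping any `s ∈ X ∩ Y` opens the path
`u - s - v`. -/
lemma cliqueGraph_adj_iff {X Y : CV G} :
    (cliqueGraph G).Adj X Y ↔ X ≠ Y ∧ ¬ Linked G (X.1 ∩ Y.1) X.1 Y.1 := by
  refine ⟨fun ⟨hne, h⟩ => ⟨hne, ?_⟩, fun ⟨hne, h⟩ => ⟨hne, fun u hu v hv => ?_⟩⟩
  · rintro ⟨u, hu, v, hv, huv⟩
    rw [Finset.sdiff_inter_self_left] at hu
    rw [Finset.sdiff_inter_self_right] at hv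
    exact (separates_iff.1 (h u hu v hv).1).2.2 huv
  · rw [Finset.mem_sdiff] at hu hv
    have huS : u ∉ X.1 ∩ Y.1 := fun h => hu.2 (Finset.mem_inter.1 h).2
    have hvS : v ∉ X.1 ∩ Y.1 := fun h => hv.2 (Finset.mem_inter.1 h).1
    refine ⟨separates_iff.2 ⟨huS, hvS, fun huv => h ⟨u, ?_, v, ?_, huv⟩⟩, ?_⟩
    · exact Finset.mem_sdiff.2 ⟨hu.1, huS⟩
    · exact Finset.mem_sdiff.2 ⟨hv.1, hvS⟩
    rintro S' hS' hsep
    obtain ⟨s, hs, hsS'⟩ := Finset.exists_of_ssubset hS'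
    have huS' : u ∉ S' := fun h => huS (hS'.1 h)
    have hvS' : v ∉ S' := fun h => hvS (hS'.1 h)
    have hus : ReachableAvoiding G S' u s :=
      .of_isClique X.2.1 hu.1 (Finset.mem_inter.1 hs).1 huS' hsS'
    have hsv : ReachableAvoiding G S' s v :=
      .of_isClique Y.2.1 (Finset.mem_inter.1 hs).2 hv.1 hsS' hvS'
    exact (separates_iff.1 hsep).2.2 (hus.trans hsv)

lemma cliqueGraph_adj_of_not_linked {S : Finset V} {X Y : CV G} (hne : X ≠ Y)
    (hX : S ⊆ X.1) (hY : S ⊆ Y.1) (h : ¬ Linked G S X.1 Y.1) : (cliqueGraph G).Adj X Y := by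
  have hXY : X.1 ∩ Y.1 = S := by
    refine Finset.Subset.antisymm (fun x hx => ?_) (Finset.subset_inter hX hY)
    by_contra hxS
    exact h (.of_mem_inter (Finset.mem_inter.1 hx).1 (Finset.mem_inter.1 hx).2 hxS)
  exact cliqueGraph_adj_iff.2 ⟨hne, hXY ▸ h⟩

lemma not_subset_inter_of_cliqueGraph_adj {X Y : CV G} (h : (cliqueGraph G).Adj X Y)
    (Z : CV G) : ¬ Z.1 ⊆ X.1 ∩ Y.1 := by
  intro hZ
  have hZX : Z.1 = X.1 := Z.2.2 X.1 X.2.1 (hZ.trans Finset.inter_subset_left)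
  have hXY : X.1 = Y.1 := X.2.2 Y.1 Y.2.1 (hZX ▸ hZ.trans Finset.inter_subset_right)
  exact h.1 (Subtype.ext hXY)

lemma card_inter_eq_of_umk_ne {X Y : CV G}
    (h : (cliqueGraph G).Adj X Y) (hXY : umk G w X ≠ umk G w Y) :
    (X.1 ∩ Y.1).card = w := by
  by_contra hc
  exact hXY (ConnectedComponent.sound (Adj.reachable (G := unitGraph G w) ⟨h, hc⟩))

lemma inter_eq_of_subset_of_umk_ne {X Y X' Y' : CV G}
    (h : (cliqueGraph G).Adj X Y) (hXY : umk G w X ≠ umk G w Y)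
    (h' : (cliqueGraph G).Adj X' Y') (hXY' : umk G w X' ≠ umk G w Y')
    (hsub : X.1 ∩ Y.1 ⊆ X'.1 ∩ Y'.1) : X.1 ∩ Y.1 = X'.1 ∩ Y'.1 :=
  Finset.eq_of_subset_of_card_le hsub <| by
    rw [card_inter_eq_of_umk_ne h hXY, card_inter_eq_of_umk_ne h' hXY']

lemma linked_of_umk_eq (hw : IsMinEdgeWeight G w) {X Y : CV G}
    (h : (cliqueGraph G).Adj X Y) (hXY : umk G w X ≠ umk G w Y) {Z Z' : CV G}
    (hZ : umk G w Z = umk G w Z') : Linked G (X.1 ∩ Y.1) Z.1 Z'.1 := by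
  obtain ⟨p⟩ := ConnectedComponent.exact hZ
  clear hZ
  induction p with
  | nil => exact .of_not_subset (not_subset_inter_of_cliqueGraph_adj h _)
  | @cons Z Z₁ Z' hZZ₁ _ ih =>
    refine Linked.trans Z₁.2.1 ?_ ih
    have hsub : ¬ Z.1 ∩ Z₁.1 ⊆ X.1 ∩ Y.1 := fun hsub => by
      have := Finset.card_le_card hsub
      have := hw.2 Z Z₁ hZZ₁.1
      rw [card_inter_eq_of_umk_ne h hXY] at *
      exact hZZ₁.2 (by omega)
    obtain ⟨x, hx, hxS⟩ := Finset.not_subset.1 hsub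
    exact .of_mem_inter (Finset.mem_inter.1 hx).1 (Finset.mem_inter.1 hx).2 hxS

lemma inter_eq_of_not_linked (hw : IsMinEdgeWeight G w) {K K' A B : CV G}
    (hKK' : (cliqueGraph G).Adj K K') (hU : umk G w K ≠ umk G w K')
    (hAB : (cliqueGraph G).Adj A B) (hA : umk G w A = umk G w K)
    (hB : umk G w B ≠ umk G w K) (h : ¬ Linked G (K.1 ∩ K'.1) B.1 K.1) :
    A.1 ∩ B.1 = K.1 ∩ K'.1 := by
  refine inter_eq_of_subset_of_umk_ne hAB (by rw [hA]; exact hB.symm) hKK' hU fun x hx => ?_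
  by_contra hxS
  have hBA : Linked G (K.1 ∩ K'.1) B.1 A.1 :=
    .of_mem_inter (Finset.mem_inter.1 hx).2 (Finset.mem_inter.1 hx).1 hxS
  exact h (hBA.trans A.2.1 (linked_of_umk_eq hw hKK' hU hA))

/-- Suppose `Z ∈ P` meets `K'` in `G - S`, where `S = K ∩ K'`, and let `A B`, `A' B'` be
edges from `U`, `U'` to `P`. Then `P` misses `K` in `G - S`, so `A ∩ B = S`; and
`T = A' ∩ B'` differs from `S`, as `A', K', Z, B'` meet in `G - S`. Since `|S| = |T| = w`,
some `x ∈ S` avoids `T`; it joins `K` to `K'` and `A` to `B` in `G - T`, so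
`A', K', K, A, B, B'` all meet in `G - T`, contradicting `A' B' ∈ C(G)`. -/
lemma not_linked_of_layerGraph_adj (hw : IsMinEdgeWeight G w) {K K' : CV G}
    (hKK' : (cliqueGraph G).Adj K K') (hU : umk G w K ≠ umk G w K') {P : LUnit G w}
    (hUP : (layerGraph G w).Adj (umk G w K) P) (hU'P : (layerGraph G w).Adj (umk G w K') P)
    {Z : CV G} (hZ : umk G w Z = P) : ¬ Linked G (K.1 ∩ K'.1) Z.1 K'.1 := by
  intro hZK'
  obtain ⟨hPK, A, B, hAB, hA, hB⟩ := hUP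
  obtain ⟨hPK', A', B', hA'B', hA', hB'⟩ := hU'P
  have hA'B'u : umk G w A' ≠ umk G w B' := by rw [hA', hB']; exact hPK'
  have hsepS := (cliqueGraph_adj_iff.1 hKK').2
  have hsepT := (cliqueGraph_adj_iff.1 hA'B').2
  have hABS : A.1 ∩ B.1 = K.1 ∩ K'.1 := by
    refine inter_eq_of_not_linked hw hKK' hU hAB hA (by rw [hB]; exact hPK.symm) fun hBK => ?_
    have hBZ := linked_of_umk_eq hw hKK' hU (hB.trans hZ.symm)
    exact hsepS ((hBK.symm.trans B.2.1 hBZ).trans Z.2.1 hZK')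
  have hST : ¬ K.1 ∩ K'.1 ⊆ A'.1 ∩ B'.1 := fun hST => by
    have hA'K' := linked_of_umk_eq hw hKK' hU hA'
    have hZB' := linked_of_umk_eq hw hKK' hU (hZ.trans hB'.symm)
    rw [inter_eq_of_subset_of_umk_ne hKK' hU hA'B' hA'B'u hST] at hA'K' hZK' hZB'
    exact hsepT ((hA'K'.trans K'.2.1 hZK'.symm).trans Z.2.1 hZB')
  obtain ⟨x, hxS, hxT⟩ := Finset.not_subset.1 hST
  have hxK := Finset.mem_inter.1 hxS
  have hxAB := Finset.mem_inter.1 (hABS ▸ hxS)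
  have hA'K' := linked_of_umk_eq hw hA'B' hA'B'u hA'
  have hK'K : Linked G _ K'.1 K.1 := .of_mem_inter hxK.2 hxK.1 hxT
  have hKA := linked_of_umk_eq hw hA'B' hA'B'u hA.symm
  have hAB' : Linked G _ A.1 B.1 := .of_mem_inter hxAB.1 hxAB.2 hxT
  have hBB' := linked_of_umk_eq hw hA'B' hA'B'u (hB.trans hB'.symm)
  exact hsepT ((((hA'K'.trans K'.2.1 hK'K).trans K.2.1 hKA).trans A.2.1 hAB').trans B.2.1 hBB')

end

theorem stmt14_general (G : SimpleGraph V) (w : ℕ) (hw : IsMinEdgeWeight G w)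
    (U U' P : LUnit G w)
    (hUU' : (layerGraph G w).Adj U U')
    (hUP : (layerGraph G w).Adj U P) (hU'P : (layerGraph G w).Adj U' P) :
    ∀ K K' : CV G, (cliqueGraph G).Adj K K' → umk G w K = U → umk G w K' = U' →
      ∃ K'' : CV G, umk G w K'' = P ∧
        (cliqueGraph G).Adj K'' K ∧ (cliqueGraph G).Adj K'' K' := by
  rintro K K' hKK' rfl rfl
  obtain ⟨hPK, A, B, hAB, hA, hB⟩ := id hUP
  have hsepK' := not_linked_of_layerGraph_adj hw hKK' hUU'.1 hUP hU'P hB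
  have hsepK : ¬ Linked G (K.1 ∩ K'.1) B.1 K.1 := by
    rw [Finset.inter_comm]
    exact not_linked_of_layerGraph_adj hw hKK'.symm hUU'.1.symm hU'P hUP hB
  have hSB : K.1 ∩ K'.1 ⊆ B.1 :=
    inter_eq_of_not_linked hw hKK' hUU'.1 hAB hA (by rw [hB]; exact hPK.symm) hsepK ▸
      Finset.inter_subset_right
  refine ⟨B, hB, cliqueGraph_adj_of_not_linked ?_ hSB Finset.inter_subset_left hsepK,
    cliqueGraph_adj_of_not_linked ?_ hSB Finset.inter_subset_right hsepK'⟩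
  · rintro rfl
    exact hPK hB
  · rintro rfl
    exact hU'P.1 hB

/-- for adjacent units `U, U'` in the same layer with common parent `P`,
every crossing edge `KK'` of `C(G)` admits a maximal clique `K''` in `P` adjacent in
`C(G)` to both `K` and `K'`. -/
theorem stmt14 (G : SimpleGraph V) (hG : G.Connected) (hch : IsChordal G)
    (w : ℕ) (hw : IsMinEdgeWeight G w) (Kstar : CV G) (i : ℕ) (hi : 1 ≤ i)
    (U U' P : LUnit G w)
    (hU : (layerGraph G w).dist (umk G w Kstar) U = i)
    (hU' : (layerGraph G w).dist (umk G w Kstar) U' = i)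
    (hUU' : (layerGraph G w).Adj U U')
    (hP : (layerGraph G w).dist (umk G w Kstar) P = i - 1)
    (hUP : (layerGraph G w).Adj U P) (hU'P : (layerGraph G w).Adj U' P) :
    ∀ K K' : CV G, (cliqueGraph G).Adj K K' → umk G w K = U → umk G w K' = U' →
      ∃ K'' : CV G, umk G w K'' = P ∧
        (cliqueGraph G).Adj K'' K ∧ (cliqueGraph G).Adj K'' K' :=
  stmt14_general G w hw U U' P hUU' hUP hU'P
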